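/- Let A : ℝ^d → 2^{ℝ^d} be a maximal monotone operator with Int(D(A)) ≠ ∅. Then there exist a ∈ ℝ^d, M₁ > 0 and M₂ ≥ 0, depending only on A, such that for every ε > 0 and every x ∈ ℝ^d, ⟨A_ε(x), x − a⟩ ≥ M₁|A_ε(x)| − M₂|x − a| − M₁M₂. -/
import Mathlib
set_option maxHeartbeats 1000000

open Set MeasureTheory Filter Topology
open scoped RealInnerProductSpace ENNReal

noncomputable section

/-- `ℝ^d` as a Euclidean space. -/
abbrev Ed (d : ℕ) : Type := EuclideanSpace ℝ (Fin d)

/-- The domain of a multivalued operator `A : ℝ^d → 2^{ℝ^d}`. -/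
def domA {d : ℕ} (A : Ed d → Set (Ed d)) : Set (Ed d) := {x | (A x).Nonempty}

/-- `A` is a maximal monotone operator. -/
def MaxMono {d : ℕ} (A : Ed d → Set (Ed d)) : Prop :=
  ∀ x y, y ∈ A x ↔ ∀ x' y', y' ∈ A x' → 0 ≤ ⟪x - x', y - y'⟫

/-- The Yosida approximation `A_ε = (I - J_ε)/ε` associated with a resolvent family `J`. -/
def yosida {d : ℕ} (J : ℝ → Ed d → Ed d) (ε : ℝ) (x : Ed d) : Ed d :=
  ε⁻¹ • (x - J ε x)

/-- If `A` is maximal monotone with `Int(D(A)) ≠ ∅` and `J` is its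
resolvent family, then there exist `a ∈ ℝ^d`, `M₁ > 0`, `M₂ ≥ 0` (depending only on `A`)
such that for every `ε > 0` and `x ∈ ℝ^d`,
`⟨A_ε(x), x - a⟩ ≥ M₁ |A_ε(x)| - M₂ |x - a| - M₁ M₂`. -/
theorem stmt3 {d : ℕ} (A : Ed d → Set (Ed d)) (hA : MaxMono A)
    (hint : (interior (domA A)).Nonempty)
    (J : ℝ → Ed d → Ed d)
    (hJ : ∀ ε : ℝ, 0 < ε → ∀ x, ε⁻¹ • (x - J ε x) ∈ A (J ε x)) :
    ∃ (a : Ed d) (M₁ M₂ : ℝ), 0 < M₁ ∧ 0 ≤ M₂ ∧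
      ∀ ε : ℝ, 0 < ε → ∀ x : Ed d,
        M₁ * ‖yosida J ε x‖ - M₂ * ‖x - a‖ - M₁ * M₂ ≤ ⟪yosida J ε x, x - a⟫ := by
  obtain ⟨a, ha⟩ := hint
  rcases Nat.eq_zero_or_pos d with hd | hd
  · subst hd
    refine ⟨a, 1, 0, one_pos, le_rfl, fun ε hε x => ?_⟩
    have h1 : x - a = (0 : Ed 0) := Subsingleton.elim _ _
    have h2 : yosida J ε x = (0 : Ed 0) := Subsingleton.elim _ _
    simp [h1, h2]
  · have hne0 : Nonempty (Fin d) := Fin.pos_iff_nonempty.mp hd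
    have hd' : (0:ℝ) < d := by exact_mod_cast hd
    obtain ⟨r, hr, hball⟩ := Metric.mem_nhds_iff.mp (mem_interior_iff_mem_nhds.mp ha)
    set s := r / 2 with hs_def
    have hs : 0 < s := by positivity
    set z : Fin d → Bool → Ed d := fun i σ =>
      a + (if σ then s else -s) • EuclideanSpace.single i (1:ℝ) with hz_def
    have hcnorm : ∀ σ : Bool, ‖(if σ then s else -s : ℝ)‖ = s := by
      intro σ; cases σ <;> simp [Real.norm_eq_abs, abs_of_pos hs]
    have hza : ∀ i σ, ‖z i σ - a‖ = s := by
      intro i σ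
      simp only [hz_def, add_sub_cancel_left]
      rw [norm_smul, EuclideanSpace.norm_single, hcnorm σ, norm_one, mul_one]
    have hz : ∀ i σ, (A (z i σ)).Nonempty := by
      intro i σ
      apply hball
      rw [Metric.mem_ball, dist_eq_norm, hza i σ]
      rw [hs_def]; linarith
    choose y hy using hz
    obtain ⟨p₀, -, hp₀⟩ := Finset.exists_max_image (Finset.univ : Finset (Fin d × Bool))
      (fun p => ‖y p.1 p.2‖) Finset.univ_nonempty
    set M₂ := ‖y p₀.1 p₀.2‖ with hM₂_def
    have hM₂ : ∀ i σ, ‖y i σ‖ ≤ M₂ := fun i σ => hp₀ (i, σ) (Finset.mem_univ _)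
    have hM₂0 : 0 ≤ M₂ := norm_nonneg _
    have hsq : 0 < Real.sqrt d := Real.sqrt_pos.mpr hd'
    set M₁ := s / Real.sqrt d with hM₁_def
    have hM₁ : 0 < M₁ := div_pos hs hsq
    have hM₁sd : M₁ * Real.sqrt d = s := div_mul_cancel₀ _ (ne_of_gt hsq)
    refine ⟨a, M₁, M₂ + M₂ * Real.sqrt d, hM₁, by positivity, fun ε hε x => ?_⟩
    set u := yosida J ε x with hu_def
    have hu : u ∈ A (J ε x) := by
      simpa only [hu_def, yosida] using hJ ε hε x
    have mono : ∀ i σ, 0 ≤ ⟪J ε x - z i σ, u - y i σ⟫ :=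
      fun i σ => (hA _ _).mp hu (z i σ) (y i σ) (hy i σ)
    obtain ⟨i, -, hi⟩ := Finset.exists_max_image Finset.univ (fun j => |u j|) Finset.univ_nonempty
    have hi' : ∀ j, |u j| ≤ |u i| := fun j => hi j (Finset.mem_univ j)
    -- norm bound by max coordinate
    have hnorm : ‖u‖ ≤ Real.sqrt d * |u i| := by
      rw [EuclideanSpace.norm_eq]
      have hsum : ∑ j, ‖u j‖ ^ 2 ≤ (d : ℝ) * |u i| ^ 2 := by
        calc ∑ j, ‖u j‖ ^ 2 ≤ ∑ _j : Fin d, |u i| ^ 2 := by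
              apply Finset.sum_le_sum; intro j _
              rw [Real.norm_eq_abs]
              have h1 := hi' j
              nlinarith [abs_nonneg (u j)]
          _ = (d : ℝ) * |u i| ^ 2 := by
              rw [Finset.sum_const, Finset.card_univ, Fintype.card_fin, nsmul_eq_mul]
      calc Real.sqrt (∑ j, ‖u j‖ ^ 2) ≤ Real.sqrt ((d : ℝ) * |u i| ^ 2) :=
            Real.sqrt_le_sqrt hsum
        _ = Real.sqrt d * |u i| := by
            rw [Real.sqrt_mul (le_of_lt hd'), Real.sqrt_sq (abs_nonneg _)]
    -- choose sign
    obtain ⟨σ, hσcoef⟩ : ∃ σ : Bool, (if σ then s else -s) * u i = s * |u i| := by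
      by_cases h0 : 0 ≤ u i
      · exact ⟨true, by simp [abs_of_nonneg h0]⟩
      · refine ⟨false, ?_⟩
        rw [if_neg (by simp), abs_of_neg (lt_of_not_ge h0)]; ring
    -- inner product with z - a
    have hinner_z : ⟪u, z i σ - a⟫ = s * |u i| := by
      simp only [hz_def, add_sub_cancel_left]
      rw [real_inner_smul_right,
        show ⟪u, EuclideanSpace.single i (1:ℝ)⟫ = u i by
          simp [EuclideanSpace.inner_single_right], hσcoef]
    -- the monotonicity bound
    have hJz : ‖J ε x - z i σ‖ ≤ ‖J ε x - a‖ + s := by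
      have e : J ε x - z i σ = (J ε x - a) + (a - z i σ) := by abel
      have e2 : ‖a - z i σ‖ = s := by rw [← norm_neg, neg_sub, hza i σ]
      calc ‖J ε x - z i σ‖ ≤ ‖J ε x - a‖ + ‖a - z i σ‖ := by rw [e]; exact norm_add_le _ _
        _ = ‖J ε x - a‖ + s := by rw [e2]
    have f3 : -(M₂ * (‖J ε x - a‖ + s)) ≤ ⟪u, J ε x - z i σ⟫ := by
      have hm := mono i σ
      have hsplit : ⟪J ε x - z i σ, u - y i σ⟫
          = ⟪u, J ε x - z i σ⟫ - ⟪y i σ, J ε x - z i σ⟫ := by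
        rw [inner_sub_right, real_inner_comm (J ε x - z i σ) u,
          real_inner_comm (J ε x - z i σ) (y i σ)]
      have hcs : -(‖y i σ‖ * ‖J ε x - z i σ‖) ≤ ⟪y i σ, J ε x - z i σ⟫ :=
        neg_le_of_abs_le (abs_real_inner_le_norm _ _)
      have hmul : ‖y i σ‖ * ‖J ε x - z i σ‖ ≤ M₂ * (‖J ε x - a‖ + s) :=
        mul_le_mul (hM₂ i σ) hJz (norm_nonneg _) hM₂0
      linarith
    -- decomposition of the inner product
    have hxJ : x - J ε x = ε • u := by
      rw [hu_def]; simp only [yosida]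
      rw [smul_smul, mul_inv_cancel₀ hε.ne', one_smul]
    have f1 : ⟪u, x - a⟫ = ε * ‖u‖ ^ 2 + ⟪u, J ε x - z i σ⟫ + ⟪u, z i σ - a⟫ := by
      have e : ⟪u, x - a⟫
          = ⟪u, x - J ε x⟫ + ⟪u, J ε x - z i σ⟫ + ⟪u, z i σ - a⟫ := by
        rw [← inner_add_right, ← inner_add_right]
        congr 1
        abel
      rw [e, hxJ, real_inner_smul_right, real_inner_self_eq_norm_sq]
    -- resolvent distance bound
    have f5 : ‖J ε x - a‖ ≤ ‖x - a‖ + ε * ‖u‖ := by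
      have e : J ε x - a = (J ε x - x) + (x - a) := by abel
      have e2 : ‖J ε x - x‖ = ε * ‖u‖ := by
        rw [← norm_neg, neg_sub, hxJ, norm_smul, Real.norm_eq_abs, abs_of_pos hε]
      calc ‖J ε x - a‖ ≤ ‖J ε x - x‖ + ‖x - a‖ := by rw [e]; exact norm_add_le _ _
        _ = ‖x - a‖ + ε * ‖u‖ := by rw [e2]; ring
    have f4' : M₁ * ‖u‖ ≤ s * |u i| := by
      calc M₁ * ‖u‖ ≤ M₁ * (Real.sqrt d * |u i|) :=
            mul_le_mul_of_nonneg_left hnorm hM₁.le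
        _ = s * |u i| := by rw [← mul_assoc, hM₁sd]
    have hXnn : (0:ℝ) ≤ ‖x - a‖ := norm_nonneg _
    have hNnn : (0:ℝ) ≤ ‖u‖ := norm_nonneg _
    rcases le_or_gt M₂ ‖u‖ with hcase | hcase
    · -- ‖u‖ ≥ M₂
      have hq : 0 ≤ ε * ‖u‖ * (‖u‖ - M₂) :=
        mul_nonneg (mul_nonneg hε.le hNnn) (sub_nonneg.mpr hcase)
      have hf5 : M₂ * ‖J ε x - a‖ ≤ M₂ * (‖x - a‖ + ε * ‖u‖) :=
        mul_le_mul_of_nonneg_left f5 hM₂0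
      nlinarith [hinner_z, f3, f1, f4', hq, hf5,
        mul_nonneg (mul_nonneg hM₂0 hsq.le) hXnn, mul_nonneg hM₁.le hM₂0]
    · -- ‖u‖ < M₂
      have hcs : -(‖u‖ * ‖x - a‖) ≤ ⟪u, x - a⟫ :=
        neg_le_of_abs_le (abs_real_inner_le_norm _ _)
      have h1 : ‖u‖ * ‖x - a‖ ≤ M₂ * ‖x - a‖ :=
        mul_le_mul_of_nonneg_right hcase.le hXnn
      have h2 : M₁ * ‖u‖ ≤ M₁ * M₂ := mul_le_mul_of_nonneg_left hcase.le hM₁.le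
      have h3 : M₁ * (M₂ + M₂ * Real.sqrt d) = M₁ * M₂ + s * M₂ := by
        rw [mul_add, show M₁ * (M₂ * Real.sqrt d) = M₁ * Real.sqrt d * M₂ from by ring,
          hM₁sd]
      have h4 : M₂ * ‖x - a‖ ≤ (M₂ + M₂ * Real.sqrt d) * ‖x - a‖ :=
        mul_le_mul_of_nonneg_right
          (by nlinarith [mul_nonneg hM₂0 hsq.le]) hXnn
      have h5 : 0 ≤ s * M₂ := mul_nonneg hs.le hM₂0
      linarith [hcs, h1, h2, h3, h4, h5]
  
end
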